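/- arXiv:2005.03353 — 2 statements merged into one kernel-verified Lean document; each statement's English description precedes it below -/
import Mathlib

section
/- In the linear SEM setting, for fixed κ ∈ [0,1), the worst-case interventional mean squared prediction error satisfies sup_{v ∈ C(κ)} E^{do(A:=v)}[(Y − α^T Z_*)²] = l_OLS(α) + (κ/(1-κ))·l_IV(α) for every α, where l_OLS(α) = E[(Y − α^T Z_*)²] and l_IV(α) = E[A(Y−α^T Z_*)]^T E[AA^T]^{-1} E[A(Y−α^T Z_*)]. Consequently the population K-class estimand α_K(κ) = argmin_α {(1-κ)l_OLS(α) + κ·l_IV(α)} equals argmin_α sup_{v ∈ C(κ)} E^{do(A:=v)}[(Y − α^T Z_*)²]. -/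
open Matrix MeasureTheory ProbabilityTheory

/-! Under any intervention `do(A := v)` the SEM has the unique solution
`S = (1 - Bᵀ)⁻¹ (Mᵀ v + ε)`, so the residual `Y - αᵀZ_*` equals `aᵀ v + bᵀ ε` with loadings
`a = anchorLoading α`, `b = noiseLoading α` that do not depend on `v`. Since `v` is uncorrelated
with `ε`, the interventional risk is `aᵀ E[vvᵀ] a + bᵀ E[εεᵀ] b`; over `C(κ)` this is maximised
by `v = A / √(1-κ)`, with value `aᵀ E[AAᵀ] a / (1-κ) + bᵀ E[εεᵀ] b`. Taking `v = A` gives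
`l_OLS = aᵀ E[AAᵀ] a + bᵀ E[εεᵀ] b`, and `E[A (Y - αᵀZ_*)] = E[AAᵀ] a` gives
`l_IV = aᵀ E[AAᵀ] a`. Hence `(1-κ) l_OLS + κ l_IV` is `1-κ` times the worst-case risk, and the
two objectives have the same minimisers. -/

lemma Matrix.isUnit_one_sub_of_spectrum_norm_lt_one {ι : Type*} [Fintype ι] [DecidableEq ι]
    {B : Matrix ι ι ℝ} (hB : ∀ z ∈ spectrum ℂ (B.map (algebraMap ℝ ℂ)), ‖z‖ < 1) :
    IsUnit (1 - B) := by
  have h1 : (1 : ℂ) ∉ spectrum ℂ (B.map (algebraMap ℝ ℂ)) := fun h => by simpa using hB 1 h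
  have hmap : (algebraMap ℝ ℂ).mapMatrix (1 - B) = 1 - B.map (algebraMap ℝ ℂ) := by
    rw [map_sub, map_one, RingHom.mapMatrix_apply]
  rw [spectrum.notMem_iff, map_one, ← hmap, isUnit_iff_isUnit_det, ← RingHom.map_det,
    isUnit_map_iff] at h1
  exact (isUnit_iff_isUnit_det _).2 h1

lemma Matrix.eq_mulVec_add_iff {n R : Type*} [Fintype n] [DecidableEq n] [CommRing R]
    {T : Matrix n n R} (hT : IsUnit (1 - T)) (x r : n → R) :
    x = T *ᵥ x + r ↔ x = (1 - T)⁻¹ *ᵥ r := by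
  have hdet : IsUnit (1 - T).det := (isUnit_iff_isUnit_det _).1 hT
  have hx : x - T *ᵥ x = (1 - T) *ᵥ x := by rw [sub_mulVec, one_mulVec]
  rw [← sub_eq_iff_eq_add', hx]
  exact ⟨fun h => by rw [← h, mulVec_mulVec, nonsing_inv_mul _ hdet, one_mulVec],
    fun h => by rw [h, mulVec_mulVec, mul_nonsing_inv _ hdet, one_mulVec]⟩

lemma Matrix.dotProduct_mulVec_le_of_posSemidef_sub {n : Type*} [Fintype n]
    {X Y : Matrix n n ℝ} (h : (X - Y).PosSemidef) (a : n → ℝ) :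
    a ⬝ᵥ Y *ᵥ a ≤ a ⬝ᵥ X *ᵥ a := by
  have := h.dotProduct_mulVec_nonneg a
  rw [star_trivial, sub_mulVec, dotProduct_sub] at this
  linarith

namespace MeasureTheory

variable {Ω : Type*} [MeasurableSpace Ω] {μ : Measure Ω} {m n : Type*}

noncomputable def crossMoment (μ : Measure Ω) (f : Ω → m → ℝ) (g : Ω → n → ℝ) :
    Matrix m n ℝ :=
  Matrix.of fun i j => ∫ ω, f ω i * g ω j ∂μ

lemma memLp_dotProduct [Fintype n] {F : Ω → n → ℝ} (hF : ∀ i, MemLp (fun ω => F ω i) 2 μ)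
    (c : n → ℝ) :
    MemLp (fun ω => c ⬝ᵥ F ω) 2 μ :=
  memLp_finsetSum _ fun i _ => (hF i).const_mul (c i)

variable {f : Ω → m → ℝ} {g : Ω → n → ℝ}

lemma integral_mul_dotProduct [Fintype n] (hf : ∀ i, MemLp (fun ω => f ω i) 2 μ)
    (hg : ∀ j, MemLp (fun ω => g ω j) 2 μ) (b : n → ℝ) (i : m) :
    ∫ ω, f ω i * (b ⬝ᵥ g ω) ∂μ = (crossMoment μ f g *ᵥ b) i := by
  simp only [dotProduct, Finset.mul_sum, mulVec, crossMoment, of_apply]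
  rw [integral_finsetSum _ fun j _ => ?_]
  · refine Finset.sum_congr rfl fun j _ => ?_
    rw [← integral_mul_const]
    congr 1; funext ω; ring
  · simp only [mul_left_comm _ (b j)]
    exact ((hf i).integrable_mul (hg j)).const_mul (b j)

lemma integral_dotProduct_mul_dotProduct [Fintype m] [Fintype n]
    (hf : ∀ i, MemLp (fun ω => f ω i) 2 μ)
    (hg : ∀ j, MemLp (fun ω => g ω j) 2 μ) (a : m → ℝ) (b : n → ℝ) :
    ∫ ω, (a ⬝ᵥ f ω) * (b ⬝ᵥ g ω) ∂μ = a ⬝ᵥ crossMoment μ f g *ᵥ b := by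
  have hexpand : ∀ ω, (a ⬝ᵥ f ω) * (b ⬝ᵥ g ω) = ∑ i, a i * (f ω i * (b ⬝ᵥ g ω)) :=
    fun ω => by rw [dotProduct, Finset.sum_mul]; simp only [mul_assoc]
  rw [integral_congr_ae (.of_forall hexpand), integral_finsetSum _ fun i _ => ?_]
  · simp only [integral_const_mul, integral_mul_dotProduct hf hg]
    rfl
  · exact ((hf i).integrable_mul (memLp_dotProduct hg b)).const_mul (a i)

lemma integral_dotProduct_add_dotProduct_sq [Fintype m] [Fintype n]
    (hf : ∀ i, MemLp (fun ω => f ω i) 2 μ)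
    (hg : ∀ j, MemLp (fun ω => g ω j) 2 μ) (hfg : crossMoment μ f g = 0)
    (a : m → ℝ) (b : n → ℝ) :
    ∫ ω, (a ⬝ᵥ f ω + b ⬝ᵥ g ω) ^ 2 ∂μ =
      a ⬝ᵥ crossMoment μ f f *ᵥ a + b ⬝ᵥ crossMoment μ g g *ᵥ b := by
  have hF := memLp_dotProduct hf a
  have hG := memLp_dotProduct hg b
  have hexpand : ∀ ω, (a ⬝ᵥ f ω + b ⬝ᵥ g ω) ^ 2 = (a ⬝ᵥ f ω) * (a ⬝ᵥ f ω) +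
      (b ⬝ᵥ g ω) * (b ⬝ᵥ g ω) + 2 * ((a ⬝ᵥ f ω) * (b ⬝ᵥ g ω)) := fun ω => by ring
  simp only [hexpand]
  rw [integral_add, integral_add, integral_const_mul,
    integral_dotProduct_mul_dotProduct hf hf, integral_dotProduct_mul_dotProduct hg hg,
    integral_dotProduct_mul_dotProduct hf hg, hfg, zero_mulVec, dotProduct_zero, mul_zero,
    add_zero]
  · exact hF.integrable_mul hF
  · exact hG.integrable_mul hG
  · exact (hF.integrable_mul hF).add (hG.integrable_mul hG)
  · exact (hF.integrable_mul hG).const_mul 2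

lemma crossMoment_eq_zero_of_indepFun (hfg : IndepFun f g μ)
    (hf : ∀ i, AEStronglyMeasurable (fun ω => f ω i) μ)
    (hg : ∀ j, AEStronglyMeasurable (fun ω => g ω j) μ) (hg0 : ∀ j, ∫ ω, g ω j ∂μ = 0) :
    crossMoment μ f g = 0 := by
  ext i j
  have hij := hfg.comp (measurable_pi_apply i) (measurable_pi_apply j)
  have := hij.integral_fun_mul_eq_mul_integral (hf i) (hg j)
  rw [crossMoment, of_apply, Matrix.zero_apply]
  simpa [hg0 j] using this

lemma crossMoment_smul_left (t : ℝ) :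
    crossMoment μ (fun ω => t • f ω) g = t • crossMoment μ f g := by
  ext i j
  simp only [crossMoment, of_apply, Matrix.smul_apply, Pi.smul_apply, smul_eq_mul, mul_assoc,
    integral_const_mul]

lemma crossMoment_smul_right (t : ℝ) :
    crossMoment μ f (fun ω => t • g ω) = t • crossMoment μ f g := by
  ext i j
  simp only [crossMoment, of_apply, Matrix.smul_apply, Pi.smul_apply, smul_eq_mul,
    mul_left_comm _ t, integral_const_mul]

end MeasureTheory

noncomputable section LinearSEM

variable {ι ιA ιZ : Type*} [Fintype ι] [DecidableEq ι] [Fintype ιA] [DecidableEq ιA]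

def selectionMatrix {n : Type*} [DecidableEq n] (sel : ιZ → n) : Matrix ιZ n ℝ :=
  (1 : Matrix n n ℝ).submatrix sel id

lemma selectionMatrix_mulVec {n : Type*} [Fintype n] [DecidableEq n] (sel : ιZ → n)
    (x : n → ℝ) : selectionMatrix sel *ᵥ x = x ∘ sel := by
  ext j
  simp [selectionMatrix, mulVec, dotProduct, one_apply]

variable [Fintype ιZ] (B : Matrix ι ι ℝ) (M : Matrix ιA ι ℝ) (y : ι) (sel : ιZ → ι ⊕ ιA)

def noiseLoading (α : ιZ → ℝ) : ι → ℝ :=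
  (Pi.single y 1 - (α ᵥ* selectionMatrix sel) ∘ Sum.inl) ᵥ* (1 - Bᵀ)⁻¹

def anchorLoading (α : ιZ → ℝ) : ιA → ℝ :=
  noiseLoading B y sel α ᵥ* Mᵀ - (α ᵥ* selectionMatrix sel) ∘ Sum.inr

variable {B}

lemma residual_eq_anchorLoading_add_noiseLoading (hB : IsUnit (1 - Bᵀ)) {s e : ι → ℝ}
    {v : ιA → ℝ} (h : s = Bᵀ *ᵥ s + Mᵀ *ᵥ v + e) (α : ιZ → ℝ) :
    s y - α ⬝ᵥ (fun j => Sum.elim s v (sel j)) =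
      anchorLoading B M y sel α ⬝ᵥ v + noiseLoading B y sel α ⬝ᵥ e := by
  set w := α ᵥ* selectionMatrix sel
  have hZ : α ⬝ᵥ (fun j => Sum.elim s v (sel j)) = w ∘ Sum.inl ⬝ᵥ s + w ∘ Sum.inr ⬝ᵥ v := by
    rw [← Function.comp_def, ← selectionMatrix_mulVec, dotProduct_mulVec,
      ← sumElim_dotProduct_sumElim, Sum.elim_comp_inl_inr]
  have hs : s = (1 - Bᵀ)⁻¹ *ᵥ (Mᵀ *ᵥ v + e) :=
    (eq_mulVec_add_iff hB _ _).1 (by rw [← add_assoc]; exact h)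
  have hsolve : noiseLoading B y sel α ⬝ᵥ (Mᵀ *ᵥ v + e) = s y - w ∘ Sum.inl ⬝ᵥ s := by
    rw [noiseLoading, ← dotProduct_mulVec, ← hs, sub_dotProduct, single_one_dotProduct]
  rw [anchorLoading, hZ, sub_dotProduct, ← dotProduct_mulVec]
  rw [dotProduct_add] at hsolve
  linarith

variable {Ω : Type*} [MeasurableSpace Ω] {μ : Measure Ω} {A v : Ω → ιA → ℝ} {S ε : Ω → ι → ℝ}

lemma integral_residual_sq (hB : IsUnit (1 - Bᵀ)) (hv : ∀ i, MemLp (fun ω => v ω i) 2 μ)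
    (hε : ∀ i, MemLp (fun ω => ε ω i) 2 μ) (hvε : crossMoment μ v ε = 0)
    (hS : ∀ ω, S ω = Bᵀ *ᵥ S ω + Mᵀ *ᵥ v ω + ε ω) (α : ιZ → ℝ) :
    ∫ ω, (S ω y - α ⬝ᵥ fun j => Sum.elim (S ω) (v ω) (sel j)) ^ 2 ∂μ =
      anchorLoading B M y sel α ⬝ᵥ crossMoment μ v v *ᵥ anchorLoading B M y sel α +
        noiseLoading B y sel α ⬝ᵥ crossMoment μ ε ε *ᵥ noiseLoading B y sel α := by
  simp only [residual_eq_anchorLoading_add_noiseLoading M y sel hB (hS _)]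
  exact integral_dotProduct_add_dotProduct_sq hv hε hvε _ _

lemma integral_mul_residual (hB : IsUnit (1 - Bᵀ)) (hv : ∀ i, MemLp (fun ω => v ω i) 2 μ)
    (hε : ∀ i, MemLp (fun ω => ε ω i) 2 μ) (hvε : crossMoment μ v ε = 0)
    (hS : ∀ ω, S ω = Bᵀ *ᵥ S ω + Mᵀ *ᵥ v ω + ε ω) (α : ιZ → ℝ) (i : ιA) :
    ∫ ω, v ω i * (S ω y - α ⬝ᵥ fun j => Sum.elim (S ω) (v ω) (sel j)) ∂μ =
      (crossMoment μ v v *ᵥ anchorLoading B M y sel α) i := by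
  simp only [residual_eq_anchorLoading_add_noiseLoading M y sel hB (hS _), mul_add]
  rw [integral_add, integral_mul_dotProduct hv hv, integral_mul_dotProduct hv hε, hvε,
    zero_mulVec, Pi.zero_apply, add_zero]
  · exact (hv i).integrable_mul (memLp_dotProduct hv _)
  · exact (hv i).integrable_mul (memLp_dotProduct hε _)

lemma sSup_interventional_mse (hB : IsUnit (1 - Bᵀ)) (hA : Measurable A)
    (hA2 : ∀ i, MemLp (fun ω => A ω i) 2 μ) (hε : ∀ i, MemLp (fun ω => ε ω i) 2 μ)
    (hAε : crossMoment μ A ε = 0) {κ : ℝ} (hκ : κ < 1) (α : ιZ → ℝ) :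
    sSup {x : ℝ | ∃ v : Ω → (ιA → ℝ), ∃ Sv : Ω → (ι → ℝ), Measurable v ∧
        (∀ i, MemLp (fun ω => v ω i) 2 μ) ∧
        (∀ i j, ∫ ω, v ω i * ε ω j ∂μ = 0) ∧
        ((1 / (1 - κ)) • crossMoment μ A A - crossMoment μ v v).PosSemidef ∧
        (∀ ω, Sv ω = Bᵀ *ᵥ Sv ω + Mᵀ *ᵥ v ω + ε ω) ∧
        x = ∫ ω, (Sv ω y - α ⬝ᵥ fun j => Sum.elim (Sv ω) (v ω) (sel j)) ^ 2 ∂μ} =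
      1 / (1 - κ) *
          (anchorLoading B M y sel α ⬝ᵥ crossMoment μ A A *ᵥ anchorLoading B M y sel α) +
        noiseLoading B y sel α ⬝ᵥ crossMoment μ ε ε *ᵥ noiseLoading B y sel α := by
  refine IsGreatest.csSup_eq ⟨?_, ?_⟩
  · set t := √(1 / (1 - κ))
    have ht : t * t = 1 / (1 - κ) := Real.mul_self_sqrt (by rw [one_div_nonneg]; linarith)
    have hv : ∀ i, MemLp (fun ω => (t • A ω) i) 2 μ := fun i => (hA2 i).const_mul t
    have hvε : crossMoment μ (fun ω => t • A ω) ε = 0 := by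
      rw [crossMoment_smul_left, hAε, smul_zero]
    have hvv : crossMoment μ (fun ω => t • A ω) (fun ω => t • A ω) =
        (1 / (1 - κ)) • crossMoment μ A A := by
      rw [crossMoment_smul_left, crossMoment_smul_right, smul_smul, ht]
    have hS : ∀ ω, (1 - Bᵀ)⁻¹ *ᵥ (Mᵀ *ᵥ (t • A ω) + ε ω) =
        Bᵀ *ᵥ ((1 - Bᵀ)⁻¹ *ᵥ (Mᵀ *ᵥ (t • A ω) + ε ω)) + Mᵀ *ᵥ (t • A ω) + ε ω := fun ω => by
      rw [add_assoc]; exact (eq_mulVec_add_iff hB _ _).2 rfl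
    refine ⟨fun ω => t • A ω, _, hA.const_smul t, hv, fun i j => congrFun₂ hvε i j,
      by rw [hvv, sub_self]; exact .zero, hS, ?_⟩
    rw [integral_residual_sq M y sel hB hv hε hvε hS, hvv, smul_mulVec, dotProduct_smul,
      smul_eq_mul]
  · rintro x ⟨v, Sv, -, hv, hvε, hle, hS, rfl⟩
    rw [integral_residual_sq M y sel hB hv hε (Matrix.ext hvε) hS]
    have := dotProduct_mulVec_le_of_posSemidef_sub hle (anchorLoading B M y sel α)
    rw [smul_mulVec, dotProduct_smul, smul_eq_mul] at this
    linarith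

end LinearSEM

theorem kclass_distributional_robustness_general
    {Ω : Type*} [MeasurableSpace Ω] (μ : Measure Ω) [IsProbabilityMeasure μ]
    {ι ιZ : Type*} [Fintype ι] [DecidableEq ι] [Fintype ιZ] {q : ℕ}
    (B : Matrix ι ι ℝ) (M : Matrix (Fin q) ι ℝ) (y : ι)
    (hB : ∀ z ∈ spectrum ℂ (B.map (algebraMap ℝ ℂ)), ‖z‖ < 1)
    (A : Ω → (Fin q → ℝ)) (ε : Ω → (ι → ℝ)) (S : Ω → (ι → ℝ))
    (hAmeas : Measurable A)
    (hA2 : ∀ i, MemLp (fun ω => A ω i) 2 μ)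
    (hε2 : ∀ i, MemLp (fun ω => ε ω i) 2 μ)
    (hindep : IndepFun A ε μ)
    (hεmean : ∀ i, ∫ ω, ε ω i ∂μ = 0)
    (hMA : (Matrix.of fun i j => ∫ ω, A ω i * A ω j ∂μ :
        Matrix (Fin q) (Fin q) ℝ).PosDef)
    (hSEM : ∀ ω, S ω = Bᵀ.mulVec (S ω) + Mᵀ.mulVec (A ω) + ε ω)
    (sel : ιZ → ι ⊕ Fin q)
    (κ : ℝ) (hκ1 : κ < 1) :
    let MA : Matrix (Fin q) (Fin q) ℝ := Matrix.of fun i j => ∫ ω, A ω i * A ω j ∂μ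
    let Zs : Ω → (ιZ → ℝ) := fun ω j => Sum.elim (S ω) (A ω) (sel j)
    let lOLS : (ιZ → ℝ) → ℝ := fun α => ∫ ω, (S ω y - α ⬝ᵥ Zs ω) ^ 2 ∂μ
    let lIV : (ιZ → ℝ) → ℝ := fun α =>
      (fun i => ∫ ω, A ω i * (S ω y - α ⬝ᵥ Zs ω) ∂μ) ⬝ᵥ
        (MA⁻¹.mulVec fun i => ∫ ω, A ω i * (S ω y - α ⬝ᵥ Zs ω) ∂μ)
    let W : (ιZ → ℝ) → Set ℝ := fun α =>
      {x : ℝ | ∃ v : Ω → (Fin q → ℝ), ∃ Sv : Ω → (ι → ℝ), Measurable v ∧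
        (∀ i, MemLp (fun ω => v ω i) 2 μ) ∧
        (∀ i j, ∫ ω, v ω i * ε ω j ∂μ = 0) ∧
        ((1 / (1 - κ)) • MA -
            (Matrix.of fun i j => ∫ ω, v ω i * v ω j ∂μ) :
          Matrix (Fin q) (Fin q) ℝ).PosSemidef ∧
        (∀ ω, Sv ω = Bᵀ.mulVec (Sv ω) + Mᵀ.mulVec (v ω) + ε ω) ∧
        x = ∫ ω, (Sv ω y - α ⬝ᵥ fun j => Sum.elim (Sv ω) (v ω) (sel j)) ^ 2 ∂μ}
    (∀ α : ιZ → ℝ, sSup (W α) = lOLS α + (κ / (1 - κ)) * lIV α) ∧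
      ∀ α0 : ιZ → ℝ,
        (∀ α, (1 - κ) * lOLS α0 + κ * lIV α0 ≤ (1 - κ) * lOLS α + κ * lIV α) ↔
          (∀ α, sSup (W α0) ≤ sSup (W α)) := by
  intro MA Zs lOLS lIV W
  have hκ : 1 - κ ≠ 0 := (sub_pos.2 hκ1).ne'
  have hT : IsUnit (1 - Bᵀ) := by
    rw [← transpose_one, ← transpose_sub, isUnit_transpose]
    exact isUnit_one_sub_of_spectrum_norm_lt_one hB
  have hAε : crossMoment μ A ε = 0 :=
    crossMoment_eq_zero_of_indepFun hindep (fun i => (hA2 i).aestronglyMeasurable)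
      (fun j => (hε2 j).aestronglyMeasurable) hεmean
  have hOLS (α : ιZ → ℝ) : lOLS α =
      anchorLoading B M y sel α ⬝ᵥ crossMoment μ A A *ᵥ anchorLoading B M y sel α +
        noiseLoading B y sel α ⬝ᵥ crossMoment μ ε ε *ᵥ noiseLoading B y sel α :=
    integral_residual_sq M y sel hT hA2 hε2 hAε hSEM α
  have hIV (α : ιZ → ℝ) :
      lIV α = anchorLoading B M y sel α ⬝ᵥ crossMoment μ A A *ᵥ anchorLoading B M y sel α := by
    have hmoment : (fun i => ∫ ω, A ω i * (S ω y - α ⬝ᵥ Zs ω) ∂μ) =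
        MA *ᵥ anchorLoading B M y sel α :=
      funext (integral_mul_residual M y sel hT hA2 hε2 hAε hSEM α)
    rw [show lIV α = _ from congrArg (fun g => g ⬝ᵥ MA⁻¹ *ᵥ g) hmoment, mulVec_mulVec,
      nonsing_inv_mul _ ((isUnit_iff_isUnit_det _).1 hMA.isUnit), one_mulVec, dotProduct_comm]
    rfl
  have hsup (α : ιZ → ℝ) : sSup (W α) = lOLS α + κ / (1 - κ) * lIV α := by
    refine (sSup_interventional_mse M y sel hT hAmeas hA2 hε2 hAε hκ1 α).trans ?_
    rw [hOLS, hIV]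
    field_simp
    ring
  have hK (α : ιZ → ℝ) : (1 - κ) * lOLS α + κ * lIV α = (1 - κ) * sSup (W α) := by
    rw [hsup]
    field_simp
  refine ⟨hsup, fun α0 => ?_⟩
  simp only [hK, mul_le_mul_iff_of_pos_left (sub_pos.2 hκ1)]

/-- Distributional robustness of K-class estimands in a linear SEM
`S = BᵀS + Mᵀ A + ε` (row form `[Y Xᵀ Hᵀ] = [Y Xᵀ Hᵀ]B + AᵀM + εᵀ`), with
spectral radius of `B` strictly less than one, `ε ⟂ A`, `E[ε] = 0`, finite
second moments and `E[AAᵀ] ≻ 0`. For a subvector `Z_*` of `(X, A)` (selected by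
`sel`, avoiding the target coordinate `y`), and fixed `κ ∈ [0,1)`:
the worst-case interventional mean squared prediction error over `C(κ)`
equals `l_OLS(α) + (κ/(1-κ))·l_IV(α)` for every `α`, and consequently the
population K-class estimand minimizes the worst-case error. -/
theorem kclass_distributional_robustness
    {Ω : Type*} [MeasurableSpace Ω] (μ : Measure Ω) [IsProbabilityMeasure μ]
    {ι ιZ : Type*} [Fintype ι] [DecidableEq ι] [Fintype ιZ] {q : ℕ}
    (B : Matrix ι ι ℝ) (M : Matrix (Fin q) ι ℝ) (y : ι)
    (hB : ∀ z ∈ spectrum ℂ (B.map (algebraMap ℝ ℂ)), ‖z‖ < 1)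
    (A : Ω → (Fin q → ℝ)) (ε : Ω → (ι → ℝ)) (S : Ω → (ι → ℝ))
    (hAmeas : Measurable A) (hεmeas : Measurable ε)
    (hA2 : ∀ i, MemLp (fun ω => A ω i) 2 μ)
    (hε2 : ∀ i, MemLp (fun ω => ε ω i) 2 μ)
    (hindep : IndepFun A ε μ)
    (hεmean : ∀ i, ∫ ω, ε ω i ∂μ = 0)
    (hMA : (Matrix.of fun i j => ∫ ω, A ω i * A ω j ∂μ :
        Matrix (Fin q) (Fin q) ℝ).PosDef)
    (hSEM : ∀ ω, S ω = Bᵀ.mulVec (S ω) + Mᵀ.mulVec (A ω) + ε ω)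
    (sel : ιZ → ι ⊕ Fin q) (hselinj : Function.Injective sel)
    (hsel : ∀ j, sel j ≠ Sum.inl y)
    (κ : ℝ) (hκ0 : 0 ≤ κ) (hκ1 : κ < 1) :
    let MA : Matrix (Fin q) (Fin q) ℝ := Matrix.of fun i j => ∫ ω, A ω i * A ω j ∂μ
    let Zs : Ω → (ιZ → ℝ) := fun ω j => Sum.elim (S ω) (A ω) (sel j)
    let lOLS : (ιZ → ℝ) → ℝ := fun α => ∫ ω, (S ω y - α ⬝ᵥ Zs ω) ^ 2 ∂μ
    let lIV : (ιZ → ℝ) → ℝ := fun α =>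
      (fun i => ∫ ω, A ω i * (S ω y - α ⬝ᵥ Zs ω) ∂μ) ⬝ᵥ
        (MA⁻¹.mulVec fun i => ∫ ω, A ω i * (S ω y - α ⬝ᵥ Zs ω) ∂μ)
    let W : (ιZ → ℝ) → Set ℝ := fun α =>
      {x : ℝ | ∃ v : Ω → (Fin q → ℝ), ∃ Sv : Ω → (ι → ℝ), Measurable v ∧
        (∀ i, MemLp (fun ω => v ω i) 2 μ) ∧
        (∀ i j, ∫ ω, v ω i * ε ω j ∂μ = 0) ∧
        ((1 / (1 - κ)) • MA -
            (Matrix.of fun i j => ∫ ω, v ω i * v ω j ∂μ) :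
          Matrix (Fin q) (Fin q) ℝ).PosSemidef ∧
        (∀ ω, Sv ω = Bᵀ.mulVec (Sv ω) + Mᵀ.mulVec (v ω) + ε ω) ∧
        x = ∫ ω, (Sv ω y - α ⬝ᵥ fun j => Sum.elim (Sv ω) (v ω) (sel j)) ^ 2 ∂μ}
    (∀ α : ιZ → ℝ, sSup (W α) = lOLS α + (κ / (1 - κ)) * lIV α) ∧
      ∀ α0 : ιZ → ℝ,
        (∀ α, (1 - κ) * lOLS α0 + κ * lIV α0 ≤ (1 - κ) * lOLS α + κ * lIV α) ↔
          (∀ α, sSup (W α0) ≤ sSup (W α)) :=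
  kclass_distributional_robustness_general μ B M y hB A ε S hAmeas hA2 hε2 hindep hεmean hMA hSEM
    sel κ hκ1
end

section
/- In the just- or over-identified setup (q ≥ k), if λ* := inf{λ ≥ 0 : T(α̂_K(λ)) ≤ Q} is finite, where T(α) = n·l_IV(α)/l_OLS(α), α̂_K(λ) = argmin_α {l_OLS(α) + λ·l_IV(α)}, and Q > 0, then T(α̂_TSLS) ≤ Q, where α̂_TSLS = (Z^T P_A Z)^{-1} Z^T P_A Y = lim_{λ→∞} α̂_K(λ). Conversely, in the strictly monotone case, T(α̂_TSLS) < Q implies λ* < ∞. -/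
/-!
`α̂_K(λ)` minimises `l_OLS + λ l_IV` and `α̂_TSLS` minimises `l_IV`. Comparing the two minimisations
gives `l_IV(α̂_TSLS) ≤ l_IV(α̂_K(λ))` and `l_OLS(α̂_K(λ)) ≤ l_OLS(α̂_TSLS)`, hence
`T(α̂_TSLS) ≤ T(α̂_K(λ))` for every `λ ≥ 0`. Conversely, dividing the normal equations of
`α̂_K(λ)` by `λ` shows `α̂_K(λ) → α̂_TSLS` as `λ → ∞`, because the limiting system `Zᵀ P_A Z` is
invertible; `T` is continuous at `α̂_TSLS` since `l_OLS > 0`, so `T(α̂_K(λ)) < Q` for large `λ`.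
-/

open Matrix Filter Topology

namespace Matrix

variable {m n K : Type*} [Fintype n] [Field K]

theorem mulVec_injective_of_rank_eq_card {M : Matrix m n K} (h : M.rank = Fintype.card n) :
    Function.Injective M.mulVec :=
  mulVec_injective_iff.mpr <| linearIndependent_iff_card_eq_finrank_span.mpr <| by
    rw [← h, rank_eq_finrank_span_cols]; rfl

theorem mulVec_injective_of_mul_left {l : Type*} [Fintype m] {A : Matrix l m K}
    {B : Matrix m n K} (h : Function.Injective (A * B).mulVec) : Function.Injective B.mulVec :=
  Function.Injective.of_comp (f := A.mulVec) <| by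
    simpa only [Function.comp_def, mulVec_mulVec] using h

theorem inv_smul_of_ne_zero [DecidableEq n] {c : K} (hc : c ≠ 0) (M : Matrix n n K) :
    (c • M)⁻¹ = c⁻¹ • M⁻¹ := by
  by_cases hM : IsUnit M.det
  · exact inv_smul' (A := M) (Units.mk0 c hc) hM
  · have hcM : ¬IsUnit (c • M).det := by
      rwa [det_smul, IsUnit.mul_iff, not_and_or, or_iff_right (by simp [hc])]
    rw [nonsing_inv_apply_not_isUnit _ hM, nonsing_inv_apply_not_isUnit _ hcM, smul_zero]

end Matrix

theorem tendsto_inv_add_smul_mulVec_add_smul {k : Type*} [Fintype k] [DecidableEq k]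
    (M₀ M₁ : Matrix k k ℝ) (b₀ b₁ : k → ℝ) (h : IsUnit M₁.det) :
    Tendsto (fun t : ℝ => (M₀ + t • M₁)⁻¹ *ᵥ (b₀ + t • b₁)) atTop (𝓝 (M₁⁻¹ *ᵥ b₁)) := by
  have hinv : ContinuousAt Inv.inv M₁ := by
    refine continuousAt_matrix_inv _ ?_
    rw [Ring.inverse_eq_inv']
    exact continuousAt_inv₀ h.ne_zero
  -- substitute `s = t⁻¹`; the rescaled system has the invertible limit `M₁` at `s = 0`
  have hcont : ContinuousAt (fun s : ℝ => (s • M₀ + M₁)⁻¹ *ᵥ (s • b₀ + b₁)) 0 := by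
    have hM : ContinuousAt (fun s : ℝ => (s • M₀ + M₁)⁻¹) 0 :=
      ContinuousAt.comp (g := Inv.inv) (by simpa using hinv) (by fun_prop)
    exact (continuous_fst.matrix_mulVec continuous_snd).continuousAt.comp
      (hM.prodMk (by fun_prop : Continuous fun s : ℝ => s • b₀ + b₁).continuousAt)
  have hlim := hcont.tendsto.comp tendsto_inv_atTop_zero
  simp only [zero_smul, zero_add] at hlim
  refine hlim.congr' ?_
  filter_upwards [eventually_gt_atTop 0] with t ht
  have hM : M₀ + t • M₁ = t • (t⁻¹ • M₀ + M₁) := by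
    rw [smul_add, smul_smul, mul_inv_cancel₀ ht.ne', one_smul, add_comm]
  have hb : b₀ + t • b₁ = t • (t⁻¹ • b₀ + b₁) := by
    rw [smul_add, smul_smul, mul_inv_cancel₀ ht.ne', one_smul]
  rw [Function.comp_apply, hM, hb, inv_smul_of_ne_zero ht.ne', smul_mulVec, mulVec_smul,
    smul_smul, inv_mul_cancel₀ ht.ne', one_smul]

theorem div_le_div_of_penalized_min {X : Type*} {f g : X → ℝ} {lam : ℝ} (hlam : 0 ≤ lam)
    {a b : X} (ha : ∀ x, f a + lam * g a ≤ f x + lam * g x) (hb : ∀ x, g b ≤ g x)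
    (hfa : 0 < f a) (hgb : 0 ≤ g b) : g b / f b ≤ g a / f a := by
  have hf : f a ≤ f b := by
    have := mul_le_mul_of_nonneg_left (hb a) hlam
    linarith [ha b]
  exact div_le_div₀ (hgb.trans (hb a)) (hb a) hfa hf

theorem mulVec_dotProduct_mulVec_of_isIdempotentElem {n : Type*} [Fintype n]
    {P : Matrix n n ℝ} (hP : P.IsSymm) (hPP : IsIdempotentElem P) (v : n → ℝ) :
    P *ᵥ v ⬝ᵥ P *ᵥ v = v ⬝ᵥ P *ᵥ v := by
  rw [dotProduct_mulVec, vecMul_mulVec, ← mulVec_transpose, transpose_mul, transpose_transpose,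
    hP.eq, hPP.eq, dotProduct_comm]

section Projection

variable {n q : Type*} [Fintype n] [Fintype q] [DecidableEq q] (A : Matrix n q ℝ)

theorem posDef_transpose_mul_self_of_isUnit (hA : IsUnit (Aᵀ * A)) : (Aᵀ * A).PosDef :=
  PosDef.conjTranspose_mul_self A <|
    mulVec_injective_of_mul_left (A := Aᵀ) (mulVec_injective_iff_isUnit.mpr hA)

theorem posSemidef_projection (hA : IsUnit (Aᵀ * A)) : (A * (Aᵀ * A)⁻¹ * Aᵀ).PosSemidef := by
  simpa using (posDef_transpose_mul_self_of_isUnit A hA).inv.posSemidef.mul_mul_conjTranspose_same A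

theorem isIdempotentElem_projection (hA : IsUnit (Aᵀ * A)) :
    IsIdempotentElem (A * (Aᵀ * A)⁻¹ * Aᵀ) := by
  calc A * (Aᵀ * A)⁻¹ * Aᵀ * (A * (Aᵀ * A)⁻¹ * Aᵀ)
      = A * ((Aᵀ * A)⁻¹ * (Aᵀ * A)) * (Aᵀ * A)⁻¹ * Aᵀ := by simp only [Matrix.mul_assoc]
    _ = A * (Aᵀ * A)⁻¹ * Aᵀ := by
      rw [nonsing_inv_mul _ ((isUnit_iff_isUnit_det _).mp hA), Matrix.mul_one]

theorem posDef_transpose_mul_projection_mul {k : Type*} [Fintype k] (Z : Matrix n k ℝ)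
    (hA : IsUnit (Aᵀ * A)) (hAZ : Function.Injective (Aᵀ * Z).mulVec) :
    (Zᵀ * (A * (Aᵀ * A)⁻¹ * Aᵀ) * Z).PosDef := by
  simpa [Matrix.mul_assoc] using
    (posDef_transpose_mul_self_of_isUnit A hA).inv.conjTranspose_mul_mul_same hAZ

end Projection

section WeightedLeastSquares

variable {n k : Type*} [Fintype n] [Fintype k]

-- `l_OLS = weightedSSR 1`, `l_IV = weightedSSR P_A`, `α̂_K(λ) = wlsEstimator (1 + λ • P_A)` and
-- `α̂_TSLS = wlsEstimator P_A`.
noncomputable def weightedSSR (N : Matrix n n ℝ) (Z : Matrix n k ℝ) (Y : n → ℝ) (α : k → ℝ) : ℝ :=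
  (Y - Z *ᵥ α) ⬝ᵥ N *ᵥ (Y - Z *ᵥ α)

variable {N : Matrix n n ℝ} {Z : Matrix n k ℝ} {Y : n → ℝ}

theorem weightedSSR_add_smul (M : Matrix n n ℝ) (c : ℝ) (α : k → ℝ) :
    weightedSSR (N + c • M) Z Y α = weightedSSR N Z Y α + c * weightedSSR M Z Y α := by
  simp only [weightedSSR, add_mulVec, smul_mulVec, dotProduct_add, dotProduct_smul, smul_eq_mul]

theorem weightedSSR_one [DecidableEq n] (α : k → ℝ) :
    weightedSSR 1 Z Y α = (Y - Z *ᵥ α) ⬝ᵥ (Y - Z *ᵥ α) := by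
  rw [weightedSSR, one_mulVec]

theorem weightedSSR_one_pos [DecidableEq n] (hY : ∀ α, Y ≠ Z *ᵥ α) (α : k → ℝ) :
    0 < weightedSSR 1 Z Y α := by
  rw [weightedSSR_one]
  exact dotProduct_star_self_pos_iff.mpr (sub_ne_zero.mpr (hY α))

theorem weightedSSR_nonneg (hN : N.PosSemidef) (α : k → ℝ) : 0 ≤ weightedSSR N Z Y α := by
  simpa only [star_trivial, weightedSSR] using hN.dotProduct_mulVec_nonneg (Y - Z *ᵥ α)

/-- A solution of the normal equations leaves a residual `N`-orthogonal to the columns of `Z`. -/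
theorem weightedSSR_eq_add_of_normal_eq (hN : N.IsSymm) {a : k → ℝ}
    (ha : (Zᵀ * N * Z) *ᵥ a = (Zᵀ * N) *ᵥ Y) (β : k → ℝ) :
    weightedSSR N Z Y β = weightedSSR N Z Y a + Z *ᵥ (β - a) ⬝ᵥ N *ᵥ Z *ᵥ (β - a) := by
  have hβ : Y - Z *ᵥ β = (Y - Z *ᵥ a) - Z *ᵥ (β - a) := by rw [mulVec_sub]; abel
  unfold weightedSSR
  rw [hβ]
  set r := Y - Z *ᵥ a
  set d := Z *ᵥ (β - a)
  have hdr : d ⬝ᵥ N *ᵥ r = 0 := by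
    have hZNr : (Zᵀ * N) *ᵥ r = 0 := by rw [mulVec_sub, mulVec_mulVec, ha, sub_self]
    calc d ⬝ᵥ N *ᵥ r = (β - a) ⬝ᵥ (Zᵀ * N) *ᵥ r := by
          rw [← mulVec_mulVec, dotProduct_mulVec (β - a), vecMul_transpose]
      _ = 0 := by rw [hZNr, dotProduct_zero]
  have hrd : r ⬝ᵥ N *ᵥ d = 0 := by
    rw [dotProduct_mulVec, ← mulVec_transpose, hN.eq, dotProduct_comm, hdr]
  rw [mulVec_sub, sub_dotProduct, dotProduct_sub, dotProduct_sub, hdr, hrd]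
  ring

variable [DecidableEq k]

noncomputable def wlsEstimator (N : Matrix n n ℝ) (Z : Matrix n k ℝ) (Y : n → ℝ) : k → ℝ :=
  (Zᵀ * N * Z)⁻¹ *ᵥ (Zᵀ * N) *ᵥ Y

theorem weightedSSR_wlsEstimator_le (hN : N.PosSemidef) (h : IsUnit (Zᵀ * N * Z).det)
    (β : k → ℝ) : weightedSSR N Z Y (wlsEstimator N Z Y) ≤ weightedSSR N Z Y β := by
  have hnormal : (Zᵀ * N * Z) *ᵥ wlsEstimator N Z Y = (Zᵀ * N) *ᵥ Y := by
    rw [wlsEstimator, mulVec_mulVec, mul_nonsing_inv _ h, one_mulVec]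
  rw [weightedSSR_eq_add_of_normal_eq (isHermitian_iff_isSymm.mp hN.isHermitian) hnormal β]
  have := hN.dotProduct_mulVec_nonneg (Z *ᵥ (β - wlsEstimator N Z Y))
  simp only [star_trivial] at this
  linarith

theorem tendsto_wlsEstimator_one_add_smul [DecidableEq n] (P : Matrix n n ℝ)
    (h : IsUnit (Zᵀ * P * Z).det) :
    Tendsto (fun t : ℝ => wlsEstimator (1 + t • P) Z Y) atTop (𝓝 (wlsEstimator P Z Y)) := by
  convert tendsto_inv_add_smul_mulVec_add_smul (Zᵀ * Z) (Zᵀ * P * Z) (Zᵀ *ᵥ Y) ((Zᵀ * P) *ᵥ Y) h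
    using 2 with t
  simp only [wlsEstimator, Matrix.mul_add, Matrix.add_mul, Matrix.mul_one, Matrix.mul_smul,
    Matrix.smul_mul, add_mulVec, smul_mulVec]
  rfl

theorem weightedSSR_div_one_wlsEstimator_le [DecidableEq n] {P : Matrix n n ℝ}
    (hP : P.PosSemidef) (hZ : Function.Injective Z.mulVec) (hPZ : IsUnit (Zᵀ * P * Z).det)
    (hY : ∀ α, Y ≠ Z *ᵥ α) {lam : ℝ} (hlam : 0 ≤ lam) :
    weightedSSR P Z Y (wlsEstimator P Z Y) / weightedSSR 1 Z Y (wlsEstimator P Z Y) ≤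
      weightedSSR P Z Y (wlsEstimator (1 + lam • P) Z Y) /
        weightedSSR 1 Z Y (wlsEstimator (1 + lam • P) Z Y) := by
  have hN : (1 + lam • P).PosDef := PosDef.one.add_posSemidef (hP.smul hlam)
  have hNZ : IsUnit (Zᵀ * (1 + lam • P) * Z).det := by
    simpa using (hN.conjTranspose_mul_mul_same hZ).det_pos.ne'.isUnit
  refine div_le_div_of_penalized_min hlam (fun x => ?_) (weightedSSR_wlsEstimator_le hP hPZ)
    (weightedSSR_one_pos hY _) (weightedSSR_nonneg hP _)
  rw [← weightedSSR_add_smul, ← weightedSSR_add_smul]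
  exact weightedSSR_wlsEstimator_le hN.posSemidef hNZ x

end WeightedLeastSquares

theorem dual_pulse_feasibility_general {n k q : ℕ}
    (Z : Matrix (Fin n) (Fin k) ℝ) (A : Matrix (Fin n) (Fin q) ℝ) (Y : Fin n → ℝ)
    (hAA : IsUnit (Aᵀ * A)) (hAZ : (Aᵀ * Z).rank = k)
    (hY : ∀ α : Fin k → ℝ, Y ≠ Z.mulVec α) (Q : ℝ) :
    let PA : Matrix (Fin n) (Fin n) ℝ := A * (Aᵀ * A)⁻¹ * Aᵀ
    let lOLS : (Fin k → ℝ) → ℝ := fun α => (Y - Z.mulVec α) ⬝ᵥ (Y - Z.mulVec α)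
    let lIV : (Fin k → ℝ) → ℝ := fun α =>
      (PA.mulVec (Y - Z.mulVec α)) ⬝ᵥ (PA.mulVec (Y - Z.mulVec α))
    let T : (Fin k → ℝ) → ℝ := fun α => (n : ℝ) * lIV α / lOLS α
    let αK : ℝ → (Fin k → ℝ) := fun lam =>
      ((Zᵀ * (1 + lam • PA) * Z)⁻¹).mulVec ((Zᵀ * (1 + lam • PA)).mulVec Y)
    let αTSLS : Fin k → ℝ := ((Zᵀ * PA * Z)⁻¹).mulVec ((Zᵀ * PA).mulVec Y)
    ({lam : ℝ | 0 ≤ lam ∧ T (αK lam) ≤ Q}.Nonempty → T αTSLS ≤ Q) ∧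
      (StrictAntiOn (fun lam => T (αK lam)) (Set.Ici 0) →
        T αTSLS < Q → {lam : ℝ | 0 ≤ lam ∧ T (αK lam) ≤ Q}.Nonempty) := by
  intro PA lOLS lIV T αK αTSLS
  have hAZinj : Function.Injective (Aᵀ * Z).mulVec :=
    mulVec_injective_of_rank_eq_card (by rwa [Fintype.card_fin])
  have hP : PA.PosSemidef := posSemidef_projection A hAA
  have hB : IsUnit (Zᵀ * PA * Z).det :=
    (posDef_transpose_mul_projection_mul A Z hAA hAZinj).det_pos.ne'.isUnit
  have hlOLS (α) : lOLS α = weightedSSR 1 Z Y α := (weightedSSR_one α).symm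
  have hlIV (α) : lIV α = weightedSSR PA Z Y α :=
    mulVec_dotProduct_mulVec_of_isIdempotentElem (isHermitian_iff_isSymm.mp hP.isHermitian)
      (isIdempotentElem_projection A hAA) _
  have hT_le (lam : ℝ) (hlam : 0 ≤ lam) : T αTSLS ≤ T (αK lam) := by
    simp only [T, mul_div_assoc, hlOLS, hlIV]
    exact mul_le_mul_of_nonneg_left (weightedSSR_div_one_wlsEstimator_le hP
      (mulVec_injective_of_mul_left hAZinj) hB hY hlam) n.cast_nonneg
  have hlim : Tendsto αK atTop (𝓝 αTSLS) := tendsto_wlsEstimator_one_add_smul PA hB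
  have hTcont : ContinuousAt T αTSLS := ContinuousAt.div (by fun_prop) (by fun_prop)
    (by rw [hlOLS]; exact (weightedSSR_one_pos hY _).ne')
  refine ⟨fun ⟨lam, hlam, hQ⟩ => (hT_le lam hlam).trans hQ, fun _ hTQ => ?_⟩
  obtain ⟨lam, hlamQ, hlam⟩ :=
    (((hTcont.tendsto.comp hlim).eventually (gt_mem_nhds hTQ)).and (eventually_ge_atTop 0)).exists
  exact ⟨lam, hlam, hlamQ.le⟩

/-- Feasibility of the dual PULSE parameter in the just- or over-identified
setup (`k ≤ q`): if `λ* = inf{λ ≥ 0 : T(α̂_K(λ)) ≤ Q}` is finite (i.e. the set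
is nonempty), then `T(α̂_TSLS) ≤ Q`; conversely, in the strictly monotone case,
`T(α̂_TSLS) < Q` implies `λ* < ∞`. -/
theorem dual_pulse_feasibility {n k q : ℕ} (hkq : k ≤ q)
    (Z : Matrix (Fin n) (Fin k) ℝ) (A : Matrix (Fin n) (Fin q) ℝ) (Y : Fin n → ℝ)
    (hAA : IsUnit (Aᵀ * A)) (hAZ : (Aᵀ * Z).rank = k)
    (hZ : (Zᵀ * Z).PosDef)
    (hY : ∀ α : Fin k → ℝ, Y ≠ Z.mulVec α) (Q : ℝ) (hQ : 0 < Q) :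
    let PA : Matrix (Fin n) (Fin n) ℝ := A * (Aᵀ * A)⁻¹ * Aᵀ
    let lOLS : (Fin k → ℝ) → ℝ := fun α => (Y - Z.mulVec α) ⬝ᵥ (Y - Z.mulVec α)
    let lIV : (Fin k → ℝ) → ℝ := fun α =>
      (PA.mulVec (Y - Z.mulVec α)) ⬝ᵥ (PA.mulVec (Y - Z.mulVec α))
    let T : (Fin k → ℝ) → ℝ := fun α => (n : ℝ) * lIV α / lOLS α
    let αK : ℝ → (Fin k → ℝ) := fun lam =>
      ((Zᵀ * (1 + lam • PA) * Z)⁻¹).mulVec ((Zᵀ * (1 + lam • PA)).mulVec Y)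
    let αTSLS : Fin k → ℝ := ((Zᵀ * PA * Z)⁻¹).mulVec ((Zᵀ * PA).mulVec Y)
    ({lam : ℝ | 0 ≤ lam ∧ T (αK lam) ≤ Q}.Nonempty → T αTSLS ≤ Q) ∧
      (StrictAntiOn (fun lam => T (αK lam)) (Set.Ici 0) →
        T αTSLS < Q → {lam : ℝ | 0 ≤ lam ∧ T (αK lam) ≤ Q}.Nonempty) :=
  dual_pulse_feasibility_general Z A Y hAA hAZ hY Q
end
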